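/- (Theorem 2, receive side: the two-layer optimal beamformer is fixed by the high-SNR max-SINR update.) Let M = 2d and let H_{kl} ∈ ℂ^{M×M}. Let V̲_k, U̲_k ∈ ℂ^{M×d} have orthonormal columns and satisfy U̲_k^H H_{kl} V̲_l = 0 for all l ≠ k. Fix k, let the equivalent channel H̄_k = U̲_k^H H_{kk} V̲_k have singular value decomposition H̄_k = Θ_k Λ_k Φ_k^H with Θ_k = [θ_k^{(1)},…,θ_k^{(d)}], Φ_k = [φ_k^{(1)},…,φ_k^{(d)}] unitary and all singular values strictly positive. Set V*_l = V̲_l Φ_l = [v*_l^{(1)},…,v*_l^{(d)}] and u*_k^{(m)} = U̲_k θ_k^{(m)}. Set Z*_k = Σ_{l≠k} H_{kl} V*_l V*_l{}^H H_{kl}^H and assume rank(Z*_k) = d. For each m set W*_{k,m} = Z*_k + Σ_{j≠m} H_{kk} v*_k^{(j)} v*_k^{(j)H} H_{kk}^H. Then ker(W*_{k,m}) = span{u*_k^{(m)}}, and the normalized max-SINR receive filter (I + t W*_{k,m})^{-1} H_{kk} v*_k^{(m)} / ‖(I + t W*_{k,m})^{-1} H_{kk} v*_k^{(m)}‖ converges,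 as t → ∞, exactly to u*_k^{(m)}. -/

import Mathlib

open Matrix Filter
open scoped ComplexOrder

/-- The Euclidean (2-)norm of a vector in `ℂ^M`. -/
noncomputable def euclNorm {M : ℕ} (v : Fin M → ℂ) : ℝ :=
  Real.sqrt (∑ i, ‖v i‖ ^ 2)

/-!
Write `A = U̲_k Θ_k` and `B = H_kk V*_k`, whose columns are the `u*_k^{(j)}` and the
`H_kk v*_k^{(j)}`. Interference alignment gives `Z*_k A = 0`, and the rank hypothesis turns this
into `ker Z*_k = range A`; the SVD gives `Aᴴ B = Λ_k`. Since `W*_{k,m}` is a sum of positive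
semidefinite terms, its kernel is the set of `A c` orthogonal to the `H_kk v*_k^{(j)}` with
`j ≠ m`, that is, the multiples of `u*_k^{(m)}`. As `t → ∞`, `(1 + t W)⁻¹` tends to the
spectral projection of `W` onto its kernel, so the unnormalized filter tends to
`(u*ᴴ H_kk v*_k^{(m)}) u* = Λ_k^{(m)} u*`, and normalizing gives `u*_k^{(m)}`.
-/

open Topology

section EuclNorm

variable {M : ℕ}

theorem euclNorm_eq_norm_toLp (v : Fin M → ℂ) :
    euclNorm v = ‖(WithLp.toLp 2 v : EuclideanSpace ℂ (Fin M))‖ := by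
  rw [EuclideanSpace.norm_eq]; rfl

theorem continuous_euclNorm : Continuous (euclNorm (M := M)) := by
  simp_rw [funext euclNorm_eq_norm_toLp]
  exact continuous_norm.comp (PiLp.continuous_toLp 2 _)

theorem euclNorm_smul (c : ℂ) (v : Fin M → ℂ) : euclNorm (c • v) = ‖c‖ * euclNorm v := by
  simp only [euclNorm_eq_norm_toLp, WithLp.toLp_smul, norm_smul]

theorem euclNorm_eq_one_of_star_dotProduct_self {v : Fin M → ℂ} (hv : star v ⬝ᵥ v = 1) :
    euclNorm v = 1 := by
  have hsq : euclNorm v ^ 2 = 1 := by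
    rw [euclNorm_eq_norm_toLp, @norm_sq_eq_re_inner ℂ, EuclideanSpace.inner_eq_star_dotProduct,
      dotProduct_comm, WithLp.ofLp_toLp, hv, RCLike.one_re]
  exact (pow_eq_one_iff_of_nonneg (Real.sqrt_nonneg _) two_ne_zero).1 hsq

theorem Filter.Tendsto.euclNorm_inv_smul {α : Type*} {l : Filter α} {f : α → Fin M → ℂ}
    {u : Fin M → ℂ} {c : ℝ} (hf : Tendsto f l (𝓝 ((c : ℂ) • u))) (hc : 0 < c)
    (hu : euclNorm u = 1) : Tendsto (fun a => (euclNorm (f a))⁻¹ • f a) l (𝓝 u) := by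
  have hnorm : euclNorm ((c : ℂ) • u) = c := by
    rw [euclNorm_smul, hu, mul_one, Complex.norm_real, Real.norm_of_nonneg hc.le]
  have hlim := (((continuous_euclNorm.tendsto _).comp hf).inv₀ (hnorm.symm ▸ hc.ne')).smul hf
  rwa [hnorm, Complex.coe_smul, inv_smul_smul₀ hc.ne'] at hlim

end EuclNorm

theorem Set.Finite.tendstoUniformlyOn_of_tendsto {α β ι : Type*} [PseudoMetricSpace β]
    {F : ι → α → β} {f : α → β} {l : Filter ι} {s : Set α} (hs : s.Finite)
    (h : ∀ x ∈ s, Tendsto (F · x) l (𝓝 (f x))) : TendstoUniformlyOn F f l s :=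
  Metric.tendstoUniformlyOn_iff.2 fun ε hε => (eventually_all_finite hs).2 fun x hx =>
    (Metric.tendsto_nhds.1 (h x hx) ε hε).mono fun _ h => by rwa [dist_comm]

theorem tendsto_inv_one_add_mul_atTop (x : ℝ) :
    Tendsto (fun t : ℝ => (1 + t * x)⁻¹) atTop (𝓝 (Set.indicator {0} 1 x)) := by
  rcases lt_trichotomy x 0 with hx | rfl | hx
  · rw [Set.indicator_of_notMem (show x ∉ ({0} : Set ℝ) from hx.ne)]
    exact (tendsto_atBot_add_const_left _ 1
      (tendsto_id.atTop_mul_const_of_neg hx)).inv_tendsto_atBot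
  · simp
  · rw [Set.indicator_of_notMem (show x ∉ ({0} : Set ℝ) from hx.ne')]
    exact (tendsto_atTop_add_const_left _ 1 (tendsto_id.atTop_mul_const hx)).inv_tendsto_atTop

namespace Matrix

theorem mulVec_col {l m p α : Type*} [Fintype m] [NonUnitalNonAssocSemiring α]
    (X : Matrix l m α) (Y : Matrix m p α) (j : p) : X *ᵥ Y.col j = (X * Y).col j :=
  rfl

theorem conjTranspose_mul_mul_mul {l m p q r s α : Type*} [Fintype l] [Fintype m] [Fintype q]
    [Fintype r] [NonUnitalSemiring α] [StarRing α] (U : Matrix l m α) (Θ : Matrix m p α)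
    (H : Matrix l q α) (V : Matrix q r α) (Φ : Matrix r s α) :
    (U * Θ)ᴴ * (H * (V * Φ)) = Θᴴ * (Uᴴ * H * V) * Φ := by
  simp only [conjTranspose_mul, Matrix.mul_assoc]

variable {n ι 𝕜 : Type*} [RCLike 𝕜] [Fintype n]

theorem star_col_dotProduct_col (A B : Matrix n ι 𝕜) (i j : ι) :
    star (A.col i) ⬝ᵥ B.col j = (Aᴴ * B) i j :=
  rfl

theorem PosSemidef.ker_add {A B : Matrix n n 𝕜} (hA : A.PosSemidef) (hB : B.PosSemidef) :
    LinearMap.ker (A + B).mulVecLin = LinearMap.ker A.mulVecLin ⊓ LinearMap.ker B.mulVecLin := by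
  ext x
  simp only [Submodule.mem_inf, LinearMap.mem_ker, mulVecLin_apply]
  rw [← (hA.add hB).dotProduct_mulVec_zero_iff, ← hA.dotProduct_mulVec_zero_iff,
    ← hB.dotProduct_mulVec_zero_iff, add_mulVec, dotProduct_add]
  exact add_eq_zero_iff_of_nonneg (hA.dotProduct_mulVec_nonneg x) (hB.dotProduct_mulVec_nonneg x)

theorem PosSemidef.ker_sum {κ : Type*} (s : Finset κ) {A : κ → Matrix n n 𝕜}
    (hA : ∀ i ∈ s, (A i).PosSemidef) :
    LinearMap.ker (∑ i ∈ s, A i).mulVecLin = ⨅ i ∈ s, LinearMap.ker (A i).mulVecLin := by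
  classical
  induction s using Finset.induction_on with
  | empty => simp
  | insert j s hj ih =>
    rw [Finset.forall_mem_insert] at hA
    rw [Finset.sum_insert hj, hA.1.ker_add (posSemidef_sum s hA.2), ih hA.2, Finset.iInf_insert]

theorem mulVec_vecMulVec_star_eq_zero_iff (b x : n → 𝕜) :
    vecMulVec b (star b) *ᵥ x = 0 ↔ star b ⬝ᵥ x = 0 := by
  rw [vecMulVec_mulVec, op_smul_eq_smul, smul_eq_zero, or_iff_left_iff_imp]
  rintro rfl
  simp

theorem star_col_dotProduct_mulVec [Fintype ι] (A B : Matrix n ι 𝕜) (j : ι) (c : ι → 𝕜) :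
    star (B.col j) ⬝ᵥ (A *ᵥ c) = ((Bᴴ * A) *ᵥ c) j := by
  rw [← mulVec_mulVec]
  simp [mulVec, dotProduct, col]

theorem range_mulVecLin_eq_ker_of_mul_eq_zero [Fintype ι] [DecidableEq ι] {A : Matrix n ι 𝕜}
    {Z : Matrix n n 𝕜} (hA : Aᴴ * A = 1) (hZA : Z * A = 0)
    (hrank : Z.rank + Fintype.card ι = Fintype.card n) :
    LinearMap.range A.mulVecLin = LinearMap.ker Z.mulVecLin := by
  have hinj : Function.Injective A.mulVecLin := fun x y hxy => by
    simpa [mulVecLin_apply, mulVec_mulVec, hA] using congrArg (Aᴴ *ᵥ ·) hxy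
  refine Submodule.eq_of_le_of_finrank_eq ?_ ?_
  · rintro _ ⟨c, rfl⟩
    simp [mulVec_mulVec, hZA]
  · have := LinearMap.finrank_range_add_finrank_ker Z.mulVecLin
    rw [LinearMap.finrank_range_of_inj hinj]
    simp only [Module.finrank_fintype_fun_eq_card] at this ⊢
    rw [← rank] at this
    omega

theorem sum_mul_conjTranspose_mul_eq_zero {p q κ : Type*} [Fintype p] (s : Finset κ)
    {C : κ → Matrix n p 𝕜} {A : Matrix n q 𝕜} (h : ∀ l ∈ s, Aᴴ * C l = 0) :
    (∑ l ∈ s, C l * (C l)ᴴ) * A = 0 := by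
  rw [Matrix.sum_mul]
  refine Finset.sum_eq_zero fun l hl => ?_
  rw [Matrix.mul_assoc, ← conjTranspose_conjTranspose A, ← conjTranspose_mul, h l hl,
    conjTranspose_zero, Matrix.mul_zero]

theorem ker_add_sum_vecMulVec_col_eq_span [Fintype ι] [DecidableEq ι] {A B : Matrix n ι 𝕜}
    {D : ι → 𝕜} (hD : ∀ j, D j ≠ 0) (hAB : Aᴴ * B = diagonal D) {Z : Matrix n n 𝕜}
    (hZ : Z.PosSemidef) (hker : LinearMap.ker Z.mulVecLin = LinearMap.range A.mulVecLin) (m : ι) :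
    LinearMap.ker (Z + ∑ j ∈ Finset.univ.filter (· ≠ m),
      vecMulVec (B.col j) (star (B.col j))).mulVecLin = Submodule.span 𝕜 {A.col m} := by
  have hdot : ∀ j c, star (B.col j) ⬝ᵥ (A *ᵥ c) = star (D j) * c j := fun j c => by
    rw [star_col_dotProduct_mulVec, ← conjTranspose_conjTranspose A, ← conjTranspose_mul, hAB,
      diagonal_conjTranspose, mulVec_diagonal, Pi.star_apply]
  have hpsd : ∀ j ∈ Finset.univ.filter (· ≠ m),
      (vecMulVec (B.col j) (star (B.col j))).PosSemidef :=
    fun j _ => posSemidef_vecMulVec_self_star _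
  rw [hZ.ker_add (posSemidef_sum _ hpsd), PosSemidef.ker_sum _ hpsd, hker]
  ext x
  simp only [Submodule.mem_inf, Submodule.mem_iInf, LinearMap.mem_ker, mulVecLin_apply,
    mulVec_vecMulVec_star_eq_zero_iff, LinearMap.mem_range, Submodule.mem_span_singleton,
    Finset.mem_filter, Finset.mem_univ, true_and]
  constructor
  · rintro ⟨⟨c, rfl⟩, hc⟩
    have hc_single : c = Pi.single m (c m) := by
      ext j
      rcases eq_or_ne j m with rfl | hj
      · simp
      · have := hc j hj
        rw [hdot, mul_eq_zero, star_eq_zero] at this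
        rw [Pi.single_eq_of_ne hj, this.resolve_left (hD j)]
    exact ⟨c m, by rw [hc_single, mulVec_single, op_smul_eq_smul, Pi.single_eq_same]⟩
  · rintro ⟨a, rfl⟩
    have hcol : a • A.col m = A *ᵥ Pi.single m a := by rw [mulVec_single, op_smul_eq_smul]
    refine ⟨⟨Pi.single m a, hcol.symm⟩, fun j hj => ?_⟩
    rw [hcol, hdot, Pi.single_eq_of_ne hj, mul_zero]

variable [DecidableEq n]

-- `cfc (Set.indicator {0} 1) W` is the orthogonal projection onto `ker W`.
theorem IsHermitian.mul_cfc_indicator_zero {W : Matrix n n 𝕜} (hW : W.IsHermitian) :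
    W * cfc (Set.indicator {0} 1 : ℝ → ℝ) W = 0 := by
  have hW' : IsSelfAdjoint W := hW
  conv_lhs => enter [1]; rw [← cfc_id' ℝ W]
  rw [← cfc_mul _ _ _ (hg := W.finite_real_spectrum.continuousOn _)]
  refine (cfc_congr fun x _ => ?_).trans (cfc_zero ℝ W)
  by_cases hx : x = 0 <;> simp [hx]

theorem IsHermitian.cfc_indicator_zero_mulVec_of_mulVec_eq_zero {W : Matrix n n 𝕜}
    (hW : W.IsHermitian) {y : n → 𝕜} (hy : W *ᵥ y = 0) :
    cfc (Set.indicator {0} 1 : ℝ → ℝ) W *ᵥ y = y := by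
  have hW' : IsSelfAdjoint W := hW
  -- `x⁻¹ * x` is the indicator of `{0}ᶜ`, thanks to `0⁻¹ = 0`
  have hsplit : cfc (Set.indicator {0} 1 : ℝ → ℝ) W = 1 - cfc (fun x : ℝ => x⁻¹) W * W := by
    conv_rhs => enter [2, 2]; rw [← cfc_id' ℝ W]
    rw [← cfc_mul _ _ _ (hf := W.finite_real_spectrum.continuousOn _), ← cfc_one ℝ W,
      ← cfc_sub _ _ _ (hg := W.finite_real_spectrum.continuousOn _)]
    refine cfc_congr fun x _ => ?_
    by_cases hx : x = 0 <;> simp [hx]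
  rw [hsplit, sub_mulVec, one_mulVec, ← mulVec_mulVec, hy, mulVec_zero, sub_zero]

theorem IsHermitian.cfc_indicator_zero_mulVec_of_ker_eq_span {W : Matrix n n 𝕜}
    (hW : W.IsHermitian) {u : n → 𝕜} (hker : LinearMap.ker W.mulVecLin = Submodule.span 𝕜 {u})
    (hu : star u ⬝ᵥ u = 1) (x : n → 𝕜) :
    cfc (Set.indicator {0} 1 : ℝ → ℝ) W *ᵥ x = (star u ⬝ᵥ x) • u := by
  set P := cfc (Set.indicator {0} 1 : ℝ → ℝ) W
  have hPx : P *ᵥ x ∈ Submodule.span 𝕜 {u} := by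
    rw [← hker, LinearMap.mem_ker, mulVecLin_apply, mulVec_mulVec, hW.mul_cfc_indicator_zero,
      zero_mulVec]
  obtain ⟨c, hc⟩ := Submodule.mem_span_singleton.1 hPx
  have hWu : W *ᵥ u = 0 := by
    rw [← mulVecLin_apply, ← LinearMap.mem_ker, hker]
    exact Submodule.mem_span_singleton_self u
  have hPu : P *ᵥ u = u := hW.cfc_indicator_zero_mulVec_of_mulVec_eq_zero hWu
  have hPH : Pᴴ = P := (cfc_predicate _ W : IsSelfAdjoint P)
  have hcoef : star u ⬝ᵥ (P *ᵥ x) = star u ⬝ᵥ x := by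
    rw [dotProduct_mulVec, ← hPH, ← star_mulVec, hPu]
  rw [← hc, dotProduct_smul, hu, smul_eq_mul, mul_one] at hcoef
  rw [← hc, hcoef]

open scoped MatrixOrder in
theorem PosSemidef.inv_one_add_smul_eq_cfc {W : Matrix n n 𝕜} (hW : W.PosSemidef) {t : ℝ}
    (ht : 0 ≤ t) : (1 + (t : 𝕜) • W)⁻¹ = cfc (fun x : ℝ => (1 + t * x)⁻¹) W := by
  have hpos : ∀ x ∈ spectrum ℝ W, 1 + t * x ≠ 0 := fun x hx =>
    (add_pos_of_pos_of_nonneg one_pos (mul_nonneg ht (spectrum_nonneg_of_nonneg hW.nonneg hx))).ne'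
  have hW' : IsSelfAdjoint W := hW.isHermitian
  have h := cfc_inv (fun x => 1 + t * x) W hpos
  beta_reduce at h
  rw [h, cfc_const_add 1 _ _, cfc_const_mul _ _ _, cfc_id' ℝ W, nonsing_inv_eq_ringInverse,
    map_one, RCLike.real_smul_eq_coe_smul (K := 𝕜)]

theorem PosSemidef.tendsto_inv_one_add_smul {W : Matrix n n 𝕜} (hW : W.PosSemidef) :
    Tendsto (fun t : ℝ => (1 + (t : 𝕜) • W)⁻¹) atTop
      (𝓝 (cfc (Set.indicator {0} 1 : ℝ → ℝ) W)) :=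
  Tendsto.congr' ((eventually_ge_atTop 0).mono fun _ ht => (hW.inv_one_add_smul_eq_cfc ht).symm)
    (tendsto_cfc_fun (W.finite_real_spectrum.tendstoUniformlyOn_of_tendsto fun x _ =>
      tendsto_inv_one_add_mul_atTop x) (.of_forall fun _ => W.finite_real_spectrum.continuousOn _))

theorem PosSemidef.tendsto_normalized_inv_one_add_smul_mulVec {M : ℕ}
    {W : Matrix (Fin M) (Fin M) ℂ} (hW : W.PosSemidef) {u x : Fin M → ℂ} {c : ℝ}
    (hker : LinearMap.ker W.mulVecLin = Submodule.span ℂ {u}) (hu : star u ⬝ᵥ u = 1)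
    (hux : star u ⬝ᵥ x = c) (hc : 0 < c) :
    Tendsto (fun t : ℝ => (euclNorm ((1 + (t : ℂ) • W)⁻¹ *ᵥ x))⁻¹ • ((1 + (t : ℂ) • W)⁻¹ *ᵥ x))
      atTop (𝓝 u) := by
  refine Tendsto.euclNorm_inv_smul ?_ hc (euclNorm_eq_one_of_star_dotProduct_self hu)
  rw [← hux, ← hW.isHermitian.cfc_indicator_zero_mulVec_of_ker_eq_span hker hu]
  exact ((continuous_id.matrix_mulVec continuous_const).tendsto _).comp
    hW.tendsto_inv_one_add_smul

end Matrix

theorem two_layer_optimal_is_maxSINR_fixed_point_receive_general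
    {K d : ℕ}
    (H : Fin K → Fin K → Matrix (Fin (2 * d)) (Fin (2 * d)) ℂ)
    (Vu Uu : Fin K → Matrix (Fin (2 * d)) (Fin d) ℂ)
    (hUuOrth : ∀ k, (Uu k)ᴴ * Uu k = 1)
    (hIA : ∀ k l : Fin K, l ≠ k → (Uu k)ᴴ * H k l * Vu l = 0)
    (Θ Φ : Fin K → Matrix (Fin d) (Fin d) ℂ) (Λ : Fin K → Fin d → ℝ)
    (hΘ : ∀ k, (Θ k)ᴴ * Θ k = 1) (hΦ : ∀ k, (Φ k)ᴴ * Φ k = 1)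
    (hΛ : ∀ k j, 0 < Λ k j)
    (hSVD : ∀ k, (Uu k)ᴴ * H k k * Vu k
        = Θ k * Matrix.diagonal (fun j => (Λ k j : ℂ)) * (Φ k)ᴴ)
    (k : Fin K)
    (Vst : Fin K → Matrix (Fin (2 * d)) (Fin d) ℂ)
    (hVst : ∀ l, Vst l = Vu l * Φ l)
    (vst : Fin d → (Fin (2 * d) → ℂ)) (hvst : ∀ m, vst m = fun i => Vst k i m)
    (ust : Fin d → (Fin (2 * d) → ℂ))
    (hust : ∀ m, ust m = (Uu k).mulVec (fun i => Θ k i m))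
    (Zst : Matrix (Fin (2 * d)) (Fin (2 * d)) ℂ)
    (hZst : Zst = ∑ l ∈ Finset.univ.filter (· ≠ k),
        H k l * Vst l * (Vst l)ᴴ * (H k l)ᴴ)
    (hZrank : Zst.rank = d)
    (Wst : Fin d → Matrix (Fin (2 * d)) (Fin (2 * d)) ℂ)
    (hWst : ∀ m, Wst m = Zst + ∑ j ∈ Finset.univ.filter (· ≠ m),
        vecMulVec ((H k k).mulVec (vst j)) (star ((H k k).mulVec (vst j)))) :
    ∀ m : Fin d,
      LinearMap.ker (Wst m).mulVecLin = Submodule.span ℂ {ust m} ∧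
      Tendsto
        (fun t : ℝ =>
          (euclNorm ((1 + (t : ℂ) • Wst m)⁻¹.mulVec ((H k k).mulVec (vst m))))⁻¹ •
            ((1 + (t : ℂ) • Wst m)⁻¹.mulVec ((H k k).mulVec (vst m))))
        atTop (nhds (ust m)) := by
  intro m
  set A := Uu k * Θ k
  set B := H k k * Vst k
  have hAA : Aᴴ * A = 1 := by
    rw [conjTranspose_mul, Matrix.mul_assoc, ← Matrix.mul_assoc (Uu k)ᴴ, hUuOrth, Matrix.one_mul,
      hΘ]
  have hAB : Aᴴ * B = diagonal (fun j => (Λ k j : ℂ)) := by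
    rw [show B = H k k * (Vu k * Φ k) by rw [← hVst], conjTranspose_mul_mul_mul, hSVD]
    simp only [← Matrix.mul_assoc, hΘ, Matrix.one_mul]
    simp only [Matrix.mul_assoc, hΦ, Matrix.mul_one]
  have hZ : Zst = ∑ l ∈ Finset.univ.filter (· ≠ k), (H k l * Vst l) * (H k l * Vst l)ᴴ := by
    simp only [hZst, conjTranspose_mul, Matrix.mul_assoc]
  have hZA : Zst * A = 0 := hZ ▸ sum_mul_conjTranspose_mul_eq_zero _ fun l hl => by
    rw [hVst, conjTranspose_mul_mul_mul, hIA k l (Finset.mem_filter.1 hl).2, Matrix.mul_zero,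
      Matrix.zero_mul]
  have hZpsd : Zst.PosSemidef :=
    hZ ▸ posSemidef_sum _ fun l _ => posSemidef_self_mul_conjTranspose _
  have hu : ∀ j, ust j = A.col j := fun j => by rw [hust, ← col_apply', mulVec_col]
  have hv : ∀ j, H k k *ᵥ vst j = B.col j := fun j => by rw [hvst, ← col_apply', mulVec_col]
  have hW : Wst m = Zst + ∑ j ∈ Finset.univ.filter (· ≠ m),
      vecMulVec (B.col j) (star (B.col j)) := by simp only [hWst, hv]
  have hker : LinearMap.ker (Wst m).mulVecLin = Submodule.span ℂ {ust m} := by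
    rw [hW, hu]
    exact ker_add_sum_vecMulVec_col_eq_span (fun j => by exact_mod_cast (hΛ k j).ne') hAB hZpsd
      (range_mulVecLin_eq_ker_of_mul_eq_zero hAA hZA (by simp [hZrank]; ring)).symm m
  have hWpsd : (Wst m).PosSemidef :=
    hW ▸ hZpsd.add (posSemidef_sum _ fun j _ => posSemidef_vecMulVec_self_star _)
  refine ⟨hker, hWpsd.tendsto_normalized_inv_one_add_smul_mulVec hker ?_ ?_ (hΛ k m)⟩
  · rw [hu, star_col_dotProduct_col, hAA, one_apply_eq]
  · rw [hu, hv, star_col_dotProduct_col, hAB, diagonal_apply_eq]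

/-- Theorem 2, receive side: the two-layer optimal beamformer (interference-aligning
inner coders composed with the SVD-based outer coders of the equivalent channels
`H̄_k = U̲_kᴴ H_{kk} V̲_k`) is fixed by the high-SNR max-SINR update:
`ker W*_{k,m} = span{u*_k^{(m)}}` and the normalized max-SINR receive filter converges,
as `t → ∞`, exactly to `u*_k^{(m)}`. -/
theorem two_layer_optimal_is_maxSINR_fixed_point_receive
    {K d : ℕ}
    (H : Fin K → Fin K → Matrix (Fin (2 * d)) (Fin (2 * d)) ℂ)
    (Vu Uu : Fin K → Matrix (Fin (2 * d)) (Fin d) ℂ)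
    (hVuOrth : ∀ k, (Vu k)ᴴ * Vu k = 1) (hUuOrth : ∀ k, (Uu k)ᴴ * Uu k = 1)
    (hIA : ∀ k l : Fin K, l ≠ k → (Uu k)ᴴ * H k l * Vu l = 0)
    (Θ Φ : Fin K → Matrix (Fin d) (Fin d) ℂ) (Λ : Fin K → Fin d → ℝ)
    (hΘ : ∀ k, (Θ k)ᴴ * Θ k = 1) (hΦ : ∀ k, (Φ k)ᴴ * Φ k = 1)
    (hΛ : ∀ k j, 0 < Λ k j)
    (hSVD : ∀ k, (Uu k)ᴴ * H k k * Vu k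
        = Θ k * Matrix.diagonal (fun j => (Λ k j : ℂ)) * (Φ k)ᴴ)
    (k : Fin K)
    (Vst : Fin K → Matrix (Fin (2 * d)) (Fin d) ℂ)
    (hVst : ∀ l, Vst l = Vu l * Φ l)
    (vst : Fin d → (Fin (2 * d) → ℂ)) (hvst : ∀ m, vst m = fun i => Vst k i m)
    (ust : Fin d → (Fin (2 * d) → ℂ))
    (hust : ∀ m, ust m = (Uu k).mulVec (fun i => Θ k i m))
    (Zst : Matrix (Fin (2 * d)) (Fin (2 * d)) ℂ)
    (hZst : Zst = ∑ l ∈ Finset.univ.filter (· ≠ k),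
        H k l * Vst l * (Vst l)ᴴ * (H k l)ᴴ)
    (hZrank : Zst.rank = d)
    (Wst : Fin d → Matrix (Fin (2 * d)) (Fin (2 * d)) ℂ)
    (hWst : ∀ m, Wst m = Zst + ∑ j ∈ Finset.univ.filter (· ≠ m),
        vecMulVec ((H k k).mulVec (vst j)) (star ((H k k).mulVec (vst j)))) :
    ∀ m : Fin d,
      LinearMap.ker (Wst m).mulVecLin = Submodule.span ℂ {ust m} ∧
      Tendsto
        (fun t : ℝ =>
          (euclNorm ((1 + (t : ℂ) • Wst m)⁻¹.mulVec ((H k k).mulVec (vst m))))⁻¹ •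
            ((1 + (t : ℂ) • Wst m)⁻¹.mulVec ((H k k).mulVec (vst m))))
        atTop (nhds (ust m)) :=
  two_layer_optimal_is_maxSINR_fixed_point_receive_general H Vu Uu hUuOrth hIA Θ Φ Λ hΘ hΦ hΛ hSVD k
    Vst hVst vst hvst ust hust Zst hZst hZrank Wst hWst
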